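/- Let K be a field of characteristic zero and α₃, α₂, α₁, α₀, β₁, β₀ ∈ K. Let L be the D3 operator with parameters (α₃, α₂, α₁, α₀; β₁, β₀) and let L̃ be its formal derivative with respect to D, namely L̃ = 3D² + t(α₃(3D² + 3D + 1/2) + β₁) + t²(3α₂(D+1)² + β₀) + α₁t³(3D² + 9D + 13/2) + α₀t⁴(3D² + 12D + 11). Suppose φ₀ ∈ K[[t]] has constant coefficient 1 and L(φ₀) = 0, and ψ ∈ K[[t]] has constant coefficient 0 and L(ψ) + L̃(φ₀) = 0 (so that (log t)·φ₀ + ψ is formally annihilated by L). Then (1 + α₃t + α₂t² + α₁t³ + α₀t⁴)·(φ₀² + (Dψ)·φ₀ − ψ·(Dφ₀))² = φ₀² in K[[t]]. -/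

import Mathlib

open PowerSeries

/-- The Euler operator `D = t·d/dt` on formal power series: `D(tⁿ) = n·tⁿ`. -/
noncomputable def eulerD {K : Type*} [Semiring K] (f : PowerSeries K) : PowerSeries K :=
  PowerSeries.mk fun n => (n : K) * PowerSeries.coeff n f

/-- The operator `D + c`. -/
noncomputable def eulerDplus {K : Type*} [Semiring K] (c : K) (f : PowerSeries K) :
    PowerSeries K :=
  eulerD f + C c * f

/-- The D3 operator
`D³ + t(D + 1/2)(α₃(D² + D) + β₁) + t²(D+1)(α₂(D+1)² + β₀)
  + α₁t³(D+2)(D + 3/2)(D+1) + α₀t⁴(D+3)(D+2)(D+1)`. -/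
noncomputable def D3op {K : Type*} [Field K] (α₃ α₂ α₁ α₀ β₁ β₀ : K) (φ : PowerSeries K) :
    PowerSeries K :=
  eulerD (eulerD (eulerD φ))
    + X * eulerDplus (1 / 2) (C α₃ * (eulerD (eulerD φ) + eulerD φ) + C β₁ * φ)
    + X ^ 2 * eulerDplus 1 (C α₂ * eulerDplus 1 (eulerDplus 1 φ) + C β₀ * φ)
    + C α₁ * X ^ 3 * eulerDplus 2 (eulerDplus (3 / 2) (eulerDplus 1 φ))
    + C α₀ * X ^ 4 * eulerDplus 3 (eulerDplus 2 (eulerDplus 1 φ))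

/-- The formal derivative of the D3 operator with respect to `D`:
`L̃ = 3D² + t(α₃(3D² + 3D + 1/2) + β₁) + t²(3α₂(D+1)² + β₀)
  + α₁t³(3D² + 9D + 13/2) + α₀t⁴(3D² + 12D + 11)`. -/
noncomputable def D3til {K : Type*} [Field K] (α₃ α₂ α₁ α₀ β₁ β₀ : K) (φ : PowerSeries K) :
    PowerSeries K :=
  3 * eulerD (eulerD φ)
    + X * (C α₃ * (3 * eulerD (eulerD φ) + 3 * eulerD φ + C (1 / 2 : K) * φ) + C β₁ * φ)
    + X ^ 2 * (3 * (C α₂ * eulerDplus 1 (eulerDplus 1 φ)) + C β₀ * φ)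
    + C α₁ * X ^ 3 * (3 * eulerD (eulerD φ) + 9 * eulerD φ + C (13 / 2 : K) * φ)
    + C α₀ * X ^ 4 * (3 * eulerD (eulerD φ) + 12 * eulerD φ + 11 * φ)

/-! Twice the D3 operator is `L = 2F D³ + 3(DF) D² + B D + C` with `DB = 2C + D³F`, which makes it
formally skew-adjoint for `D`. Lagrange's identity then provides a bilinear concomitant `Q` with
`D Q(u, v) = u·Lv + v·Lu`, and a companion for the logarithmic solution; both vanish on `φ₀, ψ`,
being killed by `D` and having zero constant term. With `Y = φ₀² + φ₀ Dψ − ψ Dφ₀` (that is,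
`φ₀² D(φ₁/φ₀)`) and `H = F Y² − φ₀²`, a ring identity writes `φ₀ DH − 2 (Dφ₀) H` in terms of
these two concomitants, so `H/φ₀²` has zero derivative and zero constant term, and `H = 0`. -/

section EulerD

variable {R : Type*} [CommSemiring R]

lemma coeff_eulerD (n : ℕ) (f : R⟦X⟧) : coeff n (eulerD f) = n * coeff n f := by
  simp [eulerD]

lemma eulerD_eq_X_mul_derivative (f : R⟦X⟧) : eulerD f = X * d⁄dX R f := by
  ext (_ | n)
  · simp [coeff_eulerD]
  · rw [coeff_eulerD, coeff_succ_X_mul, coeff_derivative, mul_comm]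
    push_cast
    rfl

lemma constantCoeff_eulerD (f : R⟦X⟧) : constantCoeff (eulerD f) = 0 := by
  simp [eulerD_eq_X_mul_derivative]

lemma eulerD_add (f g : R⟦X⟧) : eulerD (f + g) = eulerD f + eulerD g := by
  simp [eulerD_eq_X_mul_derivative, mul_add]

lemma eulerD_mul (f g : R⟦X⟧) : eulerD (f * g) = eulerD f * g + f * eulerD g := by
  simp only [eulerD_eq_X_mul_derivative, Derivation.leibniz, smul_eq_mul]
  ring

lemma eulerD_C (r : R) : eulerD (C r) = 0 := by
  simp [eulerD_eq_X_mul_derivative]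

lemma eulerD_zero : eulerD (0 : R⟦X⟧) = 0 := by
  simp [eulerD_eq_X_mul_derivative]

lemma eulerD_one : eulerD (1 : R⟦X⟧) = 0 := by
  simp [eulerD_eq_X_mul_derivative]

lemma eulerD_ofNat (n : ℕ) [n.AtLeastTwo] : eulerD (ofNat(n) : R⟦X⟧) = 0 := by
  rw [← map_ofNat C n, eulerD_C]

lemma eulerD_X_pow (n : ℕ) : eulerD ((X : R⟦X⟧) ^ n) = (n : R⟦X⟧) * X ^ n := by
  rcases n with _ | n
  · simp [eulerD_eq_X_mul_derivative]
  · simp [eulerD_eq_X_mul_derivative]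
    ring

lemma eulerD_X : eulerD (X : R⟦X⟧) = X := by
  simpa using eulerD_X_pow (R := R) 1

lemma eulerD_sub {R : Type*} [CommRing R] (f g : R⟦X⟧) :
    eulerD (f - g) = eulerD f - eulerD g := by
  simp [eulerD_eq_X_mul_derivative, mul_sub]

lemma eulerD_inv {K : Type*} [Field K] (f : K⟦X⟧) : eulerD f⁻¹ = -f⁻¹ ^ 2 * eulerD f := by
  simp only [eulerD_eq_X_mul_derivative, derivative_inv']
  ring

lemma eq_zero_of_eulerD_eq_zero {R : Type*} [CommRing R] [IsAddTorsionFree R] {f : R⟦X⟧}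
    (hf : eulerD f = 0) (hf0 : constantCoeff f = 0) : f = 0 :=
  derivative.ext (X_mul_cancel (by rw [← eulerD_eq_X_mul_derivative, hf, map_zero, mul_zero]))
    (by rw [hf0, map_zero])

end EulerD

section SkewOp

variable {R : Type*} [CommRing R]

/-- Formally skew-adjoint with respect to `D` exactly when `D B = 2 C + D³ F`. -/
noncomputable def skewOp (F B C u : R⟦X⟧) : R⟦X⟧ :=
  2 * F * eulerD (eulerD (eulerD u)) + 3 * eulerD F * eulerD (eulerD u) + B * eulerD u + C * u

/-- The `D`-derivative of the symbol of `skewOp`, so that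
`skewOp (log t · u + v) = log t · skewOp u + skewOpDeriv u + skewOp v`. -/
noncomputable def skewOpDeriv (F B u : R⟦X⟧) : R⟦X⟧ :=
  6 * F * eulerD (eulerD u) + 6 * eulerD F * eulerD u + B * u

noncomputable def concomitant (F B u v : R⟦X⟧) : R⟦X⟧ :=
  2 * F * (u * eulerD (eulerD v) + v * eulerD (eulerD u)) - 2 * F * eulerD u * eulerD v
    + eulerD F * (u * eulerD v + v * eulerD u) + (B - eulerD (eulerD F)) * u * v

/-- `concomitant F B u (log t · u + v) = log t · concomitant F B u u + logConcomitant F B u v`. -/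
noncomputable def logConcomitant (F B u v : R⟦X⟧) : R⟦X⟧ :=
  concomitant F B u v + 2 * F * u * eulerD u + eulerD F * u ^ 2

variable {F B C : R⟦X⟧}

theorem eulerD_concomitant (hB : eulerD B = 2 * C + eulerD (eulerD (eulerD F))) (u v : R⟦X⟧) :
    eulerD (concomitant F B u v) = u * skewOp F B C v + v * skewOp F B C u := by
  simp only [concomitant, skewOp, eulerD_add, eulerD_sub, eulerD_mul, eulerD_ofNat, hB]
  ring

theorem eulerD_logConcomitant (hB : eulerD B = 2 * C + eulerD (eulerD (eulerD F)))
    (u v : R⟦X⟧) :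
    eulerD (logConcomitant F B u v)
      = u * (skewOp F B C v + skewOpDeriv F B u) + v * skewOp F B C u - concomitant F B u u := by
  rw [logConcomitant, eulerD_add, eulerD_add, eulerD_concomitant hB]
  simp only [concomitant, skewOpDeriv, eulerD_mul, eulerD_ofNat, pow_two]
  ring

theorem wronskian_identity (u v : R⟦X⟧) :
    let Y := u ^ 2 + eulerD v * u - v * eulerD u
    let H := F * Y ^ 2 - u ^ 2
    u * eulerD H - 2 * eulerD u * H
      = Y * (u * logConcomitant F B u v - v * concomitant F B u u) := by
  intro Y H
  simp only [Y, H, logConcomitant, concomitant, eulerD_add, eulerD_sub, eulerD_mul, pow_two]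
  ring

theorem constantCoeff_concomitant (u v : R⟦X⟧) :
    constantCoeff (concomitant F B u v)
      = constantCoeff B * constantCoeff u * constantCoeff v := by
  simp [concomitant, constantCoeff_eulerD]

theorem constantCoeff_logConcomitant (u v : R⟦X⟧) :
    constantCoeff (logConcomitant F B u v)
      = constantCoeff B * constantCoeff u * constantCoeff v := by
  simp [logConcomitant, constantCoeff_concomitant, constantCoeff_eulerD]

variable [IsAddTorsionFree R] {u v : R⟦X⟧}

theorem concomitant_self_eq_zero (hB : eulerD B = 2 * C + eulerD (eulerD (eulerD F)))
    (hB0 : constantCoeff B = 0) (hu : skewOp F B C u = 0) : concomitant F B u u = 0 :=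
  eq_zero_of_eulerD_eq_zero (by rw [eulerD_concomitant hB, hu]; ring)
    (by rw [constantCoeff_concomitant, hB0, zero_mul, zero_mul])

theorem logConcomitant_eq_zero (hB : eulerD B = 2 * C + eulerD (eulerD (eulerD F)))
    (hB0 : constantCoeff B = 0) (hu : skewOp F B C u = 0)
    (hv : skewOp F B C v + skewOpDeriv F B u = 0) :
    logConcomitant F B u v = 0 :=
  eq_zero_of_eulerD_eq_zero
    (by rw [eulerD_logConcomitant hB, hv, hu, concomitant_self_eq_zero hB hB0 hu]; ring)
    (by rw [constantCoeff_logConcomitant, hB0, zero_mul, zero_mul])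

end SkewOp

section Field

variable {K : Type*} [Field K] [CharZero K]

theorem eq_zero_of_mul_eulerD_eq {u H : K⟦X⟧} (hu : constantCoeff u ≠ 0)
    (hH0 : constantCoeff H = 0) (h : u * eulerD H = 2 * eulerD u * H) : H = 0 := by
  have hinv := PowerSeries.mul_inv_cancel u hu
  have hquot : H * u⁻¹ ^ 2 = 0 := by
    refine eq_zero_of_eulerD_eq_zero ?_ (by simp [hH0])
    rw [eulerD_mul, pow_two, eulerD_mul, eulerD_inv]
    linear_combination u⁻¹ ^ 3 * h - eulerD H * u⁻¹ ^ 2 * hinv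
  calc H = H * u⁻¹ ^ 2 * u ^ 2 := by linear_combination (-H * (u * u⁻¹ + 1)) * hinv
    _ = 0 := by rw [hquot, zero_mul]

theorem skewOp_wronskian_sq {F B C u v : K⟦X⟧}
    (hB : eulerD B = 2 * C + eulerD (eulerD (eulerD F))) (hB0 : constantCoeff B = 0)
    (hF0 : constantCoeff F = 1) (hu0 : constantCoeff u = 1)
    (hu : skewOp F B C u = 0) (hv : skewOp F B C v + skewOpDeriv F B u = 0) :
    F * (u ^ 2 + eulerD v * u - v * eulerD u) ^ 2 = u ^ 2 := by
  refine sub_eq_zero.1 (eq_zero_of_mul_eulerD_eq (u := u) (by simp [hu0])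
    (by simp [hF0, hu0, constantCoeff_eulerD]) ?_)
  rw [← sub_eq_zero, wronskian_identity, logConcomitant_eq_zero hB hB0 hu hv,
    concomitant_self_eq_zero hB hB0 hu]
  ring

end Field

section D3

variable {K : Type*} [Field K]

lemma two_mul_C_div_two [NeZero (2 : K)] (a : K) : 2 * C (a / 2) = C a := by
  rw [← map_ofNat C 2, ← map_mul, mul_div_cancel₀ a two_ne_zero]

variable (α₃ α₂ α₁ α₀ β₁ β₀ : K)

/-- `t⁴ F(1/t)` for the quartic `F(z) = z⁴ + α₃z³ + α₂z² + α₁z + α₀`. -/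
noncomputable def d3Lead : K⟦X⟧ :=
  1 + C α₃ * X + C α₂ * X ^ 2 + C α₁ * X ^ 3 + C α₀ * X ^ 4

noncomputable def d3CoeffD : K⟦X⟧ :=
  C (α₃ + 2 * β₁) * X + C (6 * α₂ + 2 * β₀) * X ^ 2 + C (13 * α₁) * X ^ 3 + C (22 * α₀) * X ^ 4

noncomputable def d3Coeff0 : K⟦X⟧ :=
  C β₁ * X + C (2 * α₂ + 2 * β₀) * X ^ 2 + C (6 * α₁) * X ^ 3 + C (12 * α₀) * X ^ 4

lemma eulerD_d3CoeffD : eulerD (d3CoeffD α₃ α₂ α₁ α₀ β₁ β₀)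
    = 2 * d3Coeff0 α₂ α₁ α₀ β₁ β₀ + eulerD (eulerD (eulerD (d3Lead α₃ α₂ α₁ α₀))) := by
  simp only [d3CoeffD, d3Coeff0, d3Lead, eulerD_add, eulerD_mul, eulerD_C, eulerD_X_pow,
    eulerD_X, eulerD_zero, eulerD_one, eulerD_ofNat, Nat.cast_ofNat, map_add, map_mul,
    map_ofNat]
  ring

lemma constantCoeff_d3CoeffD : constantCoeff (d3CoeffD α₃ α₂ α₁ α₀ β₁ β₀) = 0 := by
  simp [d3CoeffD]

lemma constantCoeff_d3Lead : constantCoeff (d3Lead α₃ α₂ α₁ α₀) = 1 := by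
  simp [d3Lead]

lemma two_mul_D3op [NeZero (2 : K)] (φ : K⟦X⟧) :
    2 * D3op α₃ α₂ α₁ α₀ β₁ β₀ φ
      = skewOp (d3Lead α₃ α₂ α₁ α₀) (d3CoeffD α₃ α₂ α₁ α₀ β₁ β₀) (d3Coeff0 α₂ α₁ α₀ β₁ β₀) φ := by
  simp only [D3op, eulerDplus, skewOp, d3CoeffD, d3Coeff0, d3Lead, eulerD_add, eulerD_mul,
    eulerD_C, eulerD_X_pow, eulerD_X, eulerD_zero, eulerD_one, eulerD_ofNat, Nat.cast_ofNat,
    map_add, map_mul, map_ofNat, map_one]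
  have half : (2 : K⟦X⟧) * C (1 / 2) = 1 := by rw [two_mul_C_div_two, map_one]
  have three_halves : (2 : K⟦X⟧) * C (3 / 2) = 3 := by rw [two_mul_C_div_two, map_ofNat]
  linear_combination (X * (C α₃ * (eulerD (eulerD φ) + eulerD φ) + C β₁ * φ)) * half
    + (C α₁ * X ^ 3 * (eulerD (eulerD φ) + 3 * eulerD φ + 2 * φ)) * three_halves

lemma two_mul_D3til [NeZero (2 : K)] (φ : K⟦X⟧) :
    2 * D3til α₃ α₂ α₁ α₀ β₁ β₀ φ
      = skewOpDeriv (d3Lead α₃ α₂ α₁ α₀) (d3CoeffD α₃ α₂ α₁ α₀ β₁ β₀) φ := by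
  simp only [D3til, eulerDplus, skewOpDeriv, d3CoeffD, d3Lead, eulerD_add, eulerD_mul,
    eulerD_C, eulerD_X_pow, eulerD_X, eulerD_one, Nat.cast_ofNat, map_add, map_mul, map_ofNat,
    map_one]
  have half : (2 : K⟦X⟧) * C (1 / 2) = 1 := by rw [two_mul_C_div_two, map_one]
  have thirteen_halves : (2 : K⟦X⟧) * C (13 / 2) = 13 := by rw [two_mul_C_div_two, map_ofNat]
  linear_combination (C α₃ * X * φ) * half + (C α₁ * X ^ 3 * φ) * thirteen_halves

end D3

theorem stmt_17_general {K : Type*} [Field K] [CharZero K] (α₃ α₂ α₁ α₀ β₁ β₀ : K)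
    (φ₀ ψ : PowerSeries K)
    (hφ₀ : PowerSeries.constantCoeff φ₀ = 1)
    (hL : D3op α₃ α₂ α₁ α₀ β₁ β₀ φ₀ = 0)
    (hLψ : D3op α₃ α₂ α₁ α₀ β₁ β₀ ψ + D3til α₃ α₂ α₁ α₀ β₁ β₀ φ₀ = 0) :
    (1 + C α₃ * X + C α₂ * X ^ 2 + C α₁ * X ^ 3 + C α₀ * X ^ 4)
      * (φ₀ ^ 2 + eulerD ψ * φ₀ - ψ * eulerD φ₀) ^ 2 = φ₀ ^ 2 :=
  skewOp_wronskian_sq (F := d3Lead α₃ α₂ α₁ α₀) (eulerD_d3CoeffD α₃ α₂ α₁ α₀ β₁ β₀)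
    (constantCoeff_d3CoeffD α₃ α₂ α₁ α₀ β₁ β₀) (constantCoeff_d3Lead α₃ α₂ α₁ α₀) hφ₀
    (by rw [← two_mul_D3op, hL, mul_zero])
    (by rw [← two_mul_D3op, ← two_mul_D3til, ← mul_add, hLψ, mul_zero])

theorem stmt_17 {K : Type*} [Field K] [CharZero K] (α₃ α₂ α₁ α₀ β₁ β₀ : K)
    (φ₀ ψ : PowerSeries K)
    (hφ₀ : PowerSeries.constantCoeff φ₀ = 1)
    (hψ : PowerSeries.constantCoeff ψ = 0)
    (hL : D3op α₃ α₂ α₁ α₀ β₁ β₀ φ₀ = 0)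
    (hLψ : D3op α₃ α₂ α₁ α₀ β₁ β₀ ψ + D3til α₃ α₂ α₁ α₀ β₁ β₀ φ₀ = 0) :
    (1 + C α₃ * X + C α₂ * X ^ 2 + C α₁ * X ^ 3 + C α₀ * X ^ 4)
      * (φ₀ ^ 2 + eulerD ψ * φ₀ - ψ * eulerD φ₀) ^ 2 = φ₀ ^ 2 :=
  stmt_17_general α₃ α₂ α₁ α₀ β₁ β₀ φ₀ ψ hφ₀ hL hLψ
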